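/- A pro-p group G is Frattini-resistant if and only if for all finitely generated closed subgroups H and K of G, Φ(H) ≤ Φ(K) implies H ≤ K. -/

import Mathlib

/-- A pro-`p` group: a compact Hausdorff totally disconnected topological group in which
every open normal subgroup has index a power of `p`. -/
def IsProPGroup (p : ℕ) (G : Type*) [Group G] [TopologicalSpace G] [IsTopologicalGroup G] : Prop :=
  CompactSpace G ∧ T2Space G ∧ TotallyDisconnectedSpace G ∧
    ∀ U : Subgroup G, U.Normal → IsOpen (U : Set G) → ∃ n : ℕ, U.index = p ^ n

/-- The Frattini subgroup of a subgroup `H` of `G`, viewed as a subgroup of `G`: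
the intersection of all maximal open subgroups of `H` (taken inside `H`), mapped into `G`. -/
def frattiniOf {G : Type*} [Group G] [TopologicalSpace G] (H : Subgroup G) : Subgroup G :=
  (⨅ M ∈ {M : Subgroup ↥H | IsOpen (M : Set ↥H) ∧ IsCoatom M}, M).map H.subtype

/-- `H` is topologically finitely generated. -/
def TopFG {G : Type*} [Group G] [TopologicalSpace G] [IsTopologicalGroup G] (H : Subgroup G) : Prop :=
  ∃ S : Finset G, (Subgroup.closure (S : Set G)).topologicalClosure = H

/-- The minimal number of topological generators of `H`. -/
noncomputable def genNum {G : Type*} [Group G] [TopologicalSpace G] [IsTopologicalGroup G]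
    (H : Subgroup G) : ℕ :=
  sInf {n | ∃ S : Finset G, S.card = n ∧ (Subgroup.closure (S : Set G)).topologicalClosure = H}

/-- `G` is Frattini-injective: distinct finitely generated closed subgroups have
distinct Frattini subgroups. -/
def FrattiniInjective (G : Type*) [Group G] [TopologicalSpace G] [IsTopologicalGroup G] : Prop :=
  ∀ H K : Subgroup G, IsClosed (H : Set G) → IsClosed (K : Set G) → TopFG H → TopFG K →
    frattiniOf H = frattiniOf K → H = K

/-- `(G, K, H)` is a hierarchical triple: `x ^ p ∈ H` implies `x ∈ K`. -/
def Hierarchical (p : ℕ) {G : Type*} [Group G] (K H : Subgroup G) : Prop :=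
  ∀ x : G, x ^ p ∈ H → x ∈ K

/-- `G` is Frattini-resistant: `(G, H, Φ(H))` is hierarchical for every finitely generated
closed subgroup `H`. -/
def FrattiniResistant (p : ℕ) (G : Type*) [Group G] [TopologicalSpace G] [IsTopologicalGroup G] :
    Prop :=
  ∀ H : Subgroup G, IsClosed (H : Set G) → TopFG H → Hierarchical p H (frattiniOf H)

/-- The closed commutator subgroup of `H`, as a subgroup of the ambient group. -/
def commClosure {G : Type*} [Group G] [TopologicalSpace G] [IsTopologicalGroup G]
    (H : Subgroup G) : Subgroup G :=
  (⁅H, H⁆ : Subgroup G).topologicalClosure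

/-! A maximal open subgroup `M` of a subgroup `H` of a pro-`p` group contains `N ⊓ H` for some open
normal subgroup `N`, and `H ⧸ (N ⊓ H)` embeds in the finite `p`-group `G ⧸ N`. Maximal subgroups
of finite `p`-groups are normal of index `p`, so `h ^ p ∈ M`. Hence `x ^ p ∈ Φ(H)` for every
`x ∈ H`, which gives the forward implication.

Conversely, if `x ^ p ∈ Φ(H)`, let `C` be the closed subgroup generated by `x`. The closed subgroup
generated by `x ^ p` has index `1` or `p` in `C`, so it contains `Φ(C)`, and it lies in the closed
subgroup `Φ(H)`. The hypothesis applied to `Φ(C) ≤ Φ(H)` gives `x ∈ C ≤ H`. -/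

open Subgroup

theorem Subgroup.isCoatom_map_of_surjective {P Q : Type*} [Group P] [Group Q] {f : P →* Q}
    (hf : Function.Surjective f) {M : Subgroup P} (hM : IsCoatom M) (hker : f.ker ≤ M) :
    IsCoatom (M.map f) :=
  ((gc_map_comap f).toGaloisInsertion fun K => (map_comap_eq_self_of_surjective hf K).ge
    ).isCoatom_of_image (by rwa [comap_map_eq, sup_of_le_left hker])

theorem Subgroup.isCoatom_of_index_prime {P : Type*} [Group P] {M : Subgroup P}
    (h : M.index.Prime) : IsCoatom M := by
  refine ⟨fun hM => h.ne_one (index_eq_one.mpr hM), fun L hL => index_eq_one.mp ?_⟩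
  have hrel : M.relIndex L ≠ 1 := fun h1 => hL.not_ge (relIndex_eq_one.mp h1)
  rcases Nat.prime_mul_iff.mp ((relIndex_mul_index hL.le).symm ▸ h) with ⟨-, h1⟩ | ⟨-, h1⟩
  · exact h1
  · exact absurd h1 hrel

section FinitePGroup

variable {p : ℕ} [Fact p.Prime] {Q : Type*} [Group Q] [Finite Q]

theorem IsPGroup.card_eq_of_isSimpleOrder (hQ : IsPGroup p Q) [IsSimpleOrder (Subgroup Q)] :
    Nat.card Q = p := by
  have : Nontrivial Q := Subgroup.nontrivial_iff.mp inferInstance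
  obtain ⟨n, hn, hcard⟩ := hQ.nontrivial_iff_card.mp this
  obtain ⟨q, hq⟩ := exists_prime_orderOf_dvd_card' p (hcard ▸ dvd_pow_self p hn.ne')
  have hq1 : q ≠ 1 := by
    rintro rfl
    exact (Fact.out : p.Prime).ne_one (by simpa using hq.symm)
  have htop : zpowers q = ⊤ :=
    (eq_bot_or_eq_top _).resolve_left (by simpa [zpowers_eq_bot] using hq1)
  rw [← card_top, ← htop, Nat.card_zpowers, hq]

theorem IsPGroup.pow_mem_of_isCoatom (hQ : IsPGroup p Q) {M : Subgroup Q} (hM : IsCoatom M)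
    (q : Q) : q ^ p ∈ M := by
  have : M.Normal := NormalizerCondition.normal_of_coatom M
    (Group.normalizerCondition_of_isNilpotent (h := hQ.isNilpotent)) hM
  have : IsSimpleOrder (Subgroup (Q ⧸ M)) := isSimpleOrder_iff_isCoatom_bot.mpr <| by
    simpa using isCoatom_map_of_surjective (QuotientGroup.mk'_surjective M) hM (by simp)
  rw [← QuotientGroup.eq_one_iff, QuotientGroup.mk_pow,
    ← (hQ.to_quotient M).card_eq_of_isSimpleOrder, pow_card_eq_one']

end FinitePGroup

theorem IsPGroup.pow_mem_of_isCoatom_of_ker_le {p : ℕ} [Fact p.Prime] {P Q : Type*} [Group P]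
    [Group Q] [Finite Q] (hQ : IsPGroup p Q) (f : P →* Q) {M : Subgroup P} (hM : IsCoatom M)
    (hker : f.ker ≤ M) (g : P) : g ^ p ∈ M := by
  have hker' : f.rangeRestrict.ker ≤ M := by rwa [MonoidHom.ker_rangeRestrict]
  have := (hQ.to_subgroup f.range).pow_mem_of_isCoatom
    (isCoatom_map_of_surjective f.rangeRestrict_surjective hM hker') (f.rangeRestrict g)
  rwa [← map_pow, ← mem_comap, comap_map_eq, sup_of_le_left hker'] at this

section TopologicalGroup

variable {G : Type*} [Group G] [TopologicalSpace G]

theorem zpowers_eq_top_of_dense [T1Space G] {g : G} (hg : IsOfFinOrder g)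
    (hd : Dense (zpowers g : Set G)) : zpowers g = ⊤ := by
  rw [← coe_eq_univ, ← hd.closure_eq, ((finite_zpowers.mpr hg).isClosed).closure_eq]

theorem frattiniOf_le_self (H : Subgroup G) : frattiniOf H ≤ H :=
  map_subtype_le _

theorem frattiniOf_le_map_of_isCoatom {H : Subgroup G} {M : Subgroup H}
    (hMo : IsOpen (M : Set H)) (hM : IsCoatom M) : frattiniOf H ≤ M.map H.subtype :=
  map_mono (biInf_le _ ⟨hMo, hM⟩)

variable [IsTopologicalGroup G]

theorem isClosed_frattiniOf {H : Subgroup G} (hH : IsClosed (H : Set G)) :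
    IsClosed (frattiniOf H : Set G) := by
  refine hH.isClosedMap_subtype_val _ ?_
  simp only [coe_iInf]
  exact isClosed_biInter fun M hM => M.isClosed_of_isOpen hM.1

theorem dense_zpowers_in_topologicalClosure (x : G) :
    Dense (zpowers (⟨x, le_topologicalClosure _ (mem_zpowers x)⟩ :
      (zpowers x).topologicalClosure) : Set (zpowers x).topologicalClosure) := by
  rw [Subtype.dense_iff, ← coe_subtype, ← coe_map, MonoidHom.map_zpowers]
  exact topologicalClosure_coe.subset

theorem index_subgroupOf_topologicalClosure_zpowers_dvd [T2Space G] (n : ℕ) (x : G) :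
    ((zpowers (x ^ n)).topologicalClosure.subgroupOf (zpowers x).topologicalClosure).index ∣ n := by
  rcases n.eq_zero_or_pos with rfl | hn
  · exact dvd_zero _
  set C := (zpowers x).topologicalClosure
  set M := (zpowers (x ^ n)).topologicalClosure.subgroupOf C
  -- `C` is abelian, so `M` is normal and `C ⧸ M` is a group.
  let _ : CommGroup C := commGroupTopologicalClosure _ fun a b => by
    obtain ⟨a, i, rfl⟩ := a
    obtain ⟨b, j, rfl⟩ := b
    ext
    simp only [coe_mul, ← zpow_add, add_comm]
  have : IsClosed (M : Set C) :=
    (isClosed_topologicalClosure _).preimage continuous_subtype_val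
  let q : C ⧸ M := (⟨x, le_topologicalClosure _ (mem_zpowers x)⟩ : C)
  have hqn : q ^ n = 1 := by
    rw [← QuotientGroup.mk_pow, QuotientGroup.eq_one_iff, mem_subgroupOf]
    exact le_topologicalClosure _ (mem_zpowers _)
  have hd : Dense (zpowers q : Set (C ⧸ M)) := by
    have := (QuotientGroup.mk'_surjective M).denseRange.dense_image QuotientGroup.continuous_mk
      (dense_zpowers_in_topologicalClosure x)
    rwa [← coe_map, MonoidHom.map_zpowers] at this
  rw [index_eq_card, ← card_top, ← zpowers_eq_top_of_dense (isOfFinOrder_iff_pow_eq_one.mpr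
    ⟨n, hn, hqn⟩) hd, Nat.card_zpowers]
  exact orderOf_dvd_of_pow_eq_one hqn

theorem frattiniOf_topologicalClosure_zpowers_le [T2Space G] {p : ℕ} (hp : p.Prime) (x : G) :
    frattiniOf (zpowers x).topologicalClosure ≤ (zpowers (x ^ p)).topologicalClosure := by
  set C := (zpowers x).topologicalClosure
  set N := (zpowers (x ^ p)).topologicalClosure
  rcases hp.eq_one_or_self_of_dvd _ (index_subgroupOf_topologicalClosure_zpowers_dvd p x)
    with h1 | hindex
  · exact (frattiniOf_le_self C).trans (subgroupOf_eq_top.mp (index_eq_one.mp h1))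
  · have : (N.subgroupOf C).FiniteIndex := ⟨hindex ▸ hp.ne_zero⟩
    have hopen : IsOpen (N.subgroupOf C : Set C) := isOpen_of_isClosed_of_finiteIndex _
      ((isClosed_topologicalClosure _).preimage continuous_subtype_val)
    calc frattiniOf C ≤ (N.subgroupOf C).map C.subtype :=
          frattiniOf_le_map_of_isCoatom hopen (isCoatom_of_index_prime (hindex ▸ hp))
      _ ≤ N := (subgroupOf_map_subtype N C).trans_le inf_le_left

theorem topFG_topologicalClosure_zpowers (x : G) : TopFG (zpowers x).topologicalClosure :=
  ⟨{x}, by rw [Finset.coe_singleton, zpowers_eq_closure]⟩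

end TopologicalGroup

namespace IsProPGroup

variable {p : ℕ} {G : Type*} [Group G] [TopologicalSpace G] [IsTopologicalGroup G]

theorem isPGroup_and_finite_quotient (hp : p ≠ 0) (hG : IsProPGroup p G)
    (N : OpenNormalSubgroup G) :
    IsPGroup p (G ⧸ (N : Subgroup G)) ∧ Finite (G ⧸ (N : Subgroup G)) := by
  obtain ⟨n, hn⟩ := hG.2.2.2 N N.isNormal' N.isOpen
  rw [index_eq_card] at hn
  exact ⟨.of_card hn, Nat.finite_of_card_ne_zero (hn ▸ pow_ne_zero n hp)⟩

theorem pow_mem_of_isCoatom (hp : p.Prime) (hG : IsProPGroup p G) {H : Subgroup G}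
    {M : Subgroup H} (hMo : IsOpen (M : Set H)) (hM : IsCoatom M) (h : H) : h ^ p ∈ M := by
  have := hG.1
  have := hG.2.2.1
  have := Fact.mk hp
  obtain ⟨W, hWo, hWM⟩ := isOpen_induced_iff.mp hMo
  obtain ⟨N, hNW⟩ :=
    ProfiniteGrp.exist_openNormalSubgroup_sub_open_nhds_of_one hWo (hWM.ge M.one_mem)
  obtain ⟨hpN, _⟩ := hG.isPGroup_and_finite_quotient hp.ne_zero N
  refine hpN.pow_mem_of_isCoatom_of_ker_le ((QuotientGroup.mk' _).comp H.subtype) hM ?_ h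
  intro y hy
  exact hWM.le (hNW ((QuotientGroup.eq_one_iff _).mp hy))

theorem pow_mem_frattiniOf (hp : p.Prime) (hG : IsProPGroup p G) {H : Subgroup G} {x : G}
    (hx : x ∈ H) : x ^ p ∈ frattiniOf H :=
  ⟨⟨x, hx⟩ ^ p, mem_iInf.mpr fun _ => mem_iInf.mpr fun hM => hG.pow_mem_of_isCoatom hp hM.1 hM.2 _,
    rfl⟩

end IsProPGroup

/-- A pro-`p` group is Frattini-resistant iff `Φ(H) ≤ Φ(K)` implies `H ≤ K`
for all finitely generated closed subgroups `H, K`. -/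
theorem stmt_8 {p : ℕ} (hp : p.Prime) (G : Type*) [Group G] [TopologicalSpace G]
    [IsTopologicalGroup G] (hG : IsProPGroup p G) :
    FrattiniResistant p G ↔
      ∀ H K : Subgroup G, IsClosed (H : Set G) → IsClosed (K : Set G) → TopFG H → TopFG K →
        frattiniOf H ≤ frattiniOf K → H ≤ K := by
  have := hG.2.1
  constructor
  · intro hFR H K _ hK _ hKfg hle x hx
    exact hFR K hK hKfg x (hle (hG.pow_mem_frattiniOf hp hx))
  · intro hle H hH hHfg x hx
    have hΦ : (zpowers (x ^ p)).topologicalClosure ≤ frattiniOf H :=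
      topologicalClosure_minimal _ (zpowers_le.mpr hx) (isClosed_frattiniOf hH)
    exact hle _ H (isClosed_topologicalClosure _) hH (topFG_topologicalClosure_zpowers x) hHfg
      ((frattiniOf_topologicalClosure_zpowers_le hp x).trans hΦ)
      (le_topologicalClosure _ (mem_zpowers x))
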